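/- For all u, v ∈ D_w(A₁) one has ⟨A₁u, v⟩_{X_μ} = ∫₀¹ a u'' v'' dx − (γ₀/β₀) a(0) u(0) v(0) − (γ₁/β₁) a(1) u(1) v(1) = ⟨u, A₁v⟩_{X_μ}; in particular the operator A₁ : D_w(A₁) → X_μ is symmetric. -/

import Mathlib

open MeasureTheory Set Filter

/-- `f` is absolutely continuous on `[c,d]` with (a.e.) derivative `g`,
expressed via the fundamental theorem of calculus. -/
def ACOn (c d : ℝ) (f g : ℝ → ℝ) : Prop :=
  MeasureTheory.IntegrableOn g (Set.Icc c d) ∧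
    ∀ x ∈ Set.Icc c d, f x = f c + ∫ t in c..x, g t

/-- `f` is locally absolutely continuous on `[0,1] \ {x₀}` with derivative `g`. -/
def LocACOn (x₀ : ℝ) (f g : ℝ → ℝ) : Prop :=
  ∀ c d : ℝ, 0 ≤ c → d ≤ 1 → c ≤ d → x₀ ∉ Set.Icc c d → ACOn c d f g

/-- `a` is weakly degenerate with degeneracy point `x₀`. -/
def WeaklyDeg (a : ℝ → ℝ) (x₀ : ℝ) : Prop :=
  ContinuousOn a (Set.Icc 0 1) ∧ x₀ ∈ Set.Icc (0:ℝ) 1 ∧ a x₀ = 0 ∧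
    (∀ x ∈ Set.Icc (0:ℝ) 1, x ≠ x₀ → 0 < a x) ∧
    MeasureTheory.IntegrableOn (fun x => 1 / a x) (Set.Ioo 0 1)

/-- `a` is strongly degenerate with degeneracy point `x₀`. -/
def StronglyDeg (a : ℝ → ℝ) (x₀ : ℝ) : Prop :=
  ContinuousOn a (Set.Icc 0 1) ∧ x₀ ∈ Set.Icc (0:ℝ) 1 ∧ a x₀ = 0 ∧
    (∀ x ∈ Set.Icc (0:ℝ) 1, x ≠ x₀ → 0 < a x) ∧
    ¬ MeasureTheory.IntegrableOn (fun x => 1 / a x) (Set.Ioo 0 1)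

/-- Hypothesis (H): there is `K ∈ [1,2)` such that `x ↦ |x-x₀|^K / a x` is
non-increasing on `[0,x₀)` and non-decreasing on `(x₀,1]`. -/
def HypH (a : ℝ → ℝ) (x₀ : ℝ) : Prop :=
  ∃ K : ℝ, 1 ≤ K ∧ K < 2 ∧
    AntitoneOn (fun x => |x - x₀| ^ K / a x) (Set.Ico 0 x₀) ∧
    MonotoneOn (fun x => |x - x₀| ^ K / a x) (Set.Ioc x₀ 1)

/-- The squared `L²(0,1)` norm. -/
noncomputable def sqL2 (f : ℝ → ℝ) : ℝ := ∫ x in Set.Ioo (0:ℝ) 1, (f x) ^ 2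

/-- Membership of `u` (with derivative data `u', u''` and `w₁ = (a u'')'`,
`w₂ = (a u'')''`) in the domain `D_w(A₁)` (weakly degenerate case): `u ∈ H¹(0,1)`,
`u'` absolutely continuous on `[0,1]`, `√a u'' ∈ L²(0,1)`, `a u'' ∈ H²(0,1)` and
`u''(0) = u''(1) = 0`. -/
def MemD1w (a : ℝ → ℝ) (u u' u'' w₁ w₂ : ℝ → ℝ) : Prop :=
  ACOn 0 1 u u' ∧
  MeasureTheory.IntegrableOn (fun x => (u' x) ^ 2) (Set.Ioo 0 1) ∧
  ACOn 0 1 u' u'' ∧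
  MeasureTheory.IntegrableOn (fun x => a x * (u'' x) ^ 2) (Set.Ioo 0 1) ∧
  ACOn 0 1 (fun x => a x * u'' x) w₁ ∧ ACOn 0 1 w₁ w₂ ∧
  MeasureTheory.IntegrableOn (fun x => (w₂ x) ^ 2) (Set.Ioo 0 1) ∧
  u'' 0 = 0 ∧ u'' 1 = 0

/-- Membership in the domain `D_s(A₁)` (strongly degenerate case): as `MemD1w` but `u'`
is only locally absolutely continuous on `[0,1] \ {x₀}`. -/
def MemD1s (a : ℝ → ℝ) (x₀ : ℝ) (u u' u'' w₁ w₂ : ℝ → ℝ) : Prop :=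
  ACOn 0 1 u u' ∧
  MeasureTheory.IntegrableOn (fun x => (u' x) ^ 2) (Set.Ioo 0 1) ∧
  LocACOn x₀ u' u'' ∧
  MeasureTheory.IntegrableOn (fun x => a x * (u'' x) ^ 2) (Set.Ioo 0 1) ∧
  ACOn 0 1 (fun x => a x * u'' x) w₁ ∧ ACOn 0 1 w₁ w₂ ∧
  MeasureTheory.IntegrableOn (fun x => (w₂ x) ^ 2) (Set.Ioo 0 1) ∧
  u'' 0 = 0 ∧ u'' 1 = 0

/-- The inner product of `X_μ = L²((0,1), dx) ⊕ ℝ_{a(0)/β₀} ⊕ ℝ_{a(1)/β₁}`. -/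
noncomputable def innerX (a : ℝ → ℝ) (β₀ β₁ : ℝ) (f g : ℝ → ℝ) : ℝ :=
  (∫ x in Set.Ioo (0:ℝ) 1, f x * g x) + (a 0 / β₀) * (f 0 * g 0) + (a 1 / β₁) * (f 1 * g 1)

/-- The element `A₁u` of `X_μ`: it equals `(a u'')'' = w₂` on `(0,1)` and its boundary
values are dictated by the generalized Wentzell boundary conditions:
`(A₁u)(j) = (-1)^j (β_j / a(j)) (a u'')'(j) - γ_j u(j)`. -/
noncomputable def A1fun (a : ℝ → ℝ) (β₀ β₁ γ₀ γ₁ : ℝ) (u w₁ w₂ : ℝ → ℝ) : ℝ → ℝ :=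
  fun x =>
    if x = 0 then (β₀ / a 0) * w₁ 0 - γ₀ * u 0
    else if x = 1 then -(β₁ / a 1) * w₁ 1 - γ₁ * u 1
    else w₂ x

/-!
Two integrations by parts give
`∫ (a u'')'' v = [(a u'')' v]₀¹ - [a u'' v']₀¹ + ∫ a u'' v''`.
The second boundary term vanishes because `u''(0) = u''(1) = 0`, and the first one is cancelled
by the boundary atoms of `μ`, whose weights `a(j)/β_j` are chosen to undo the factors `β_j/a(j)`
of the Wentzell conditions. What remains is symmetric in `u` and `v`.

Integration by parts for `ACOn` functions reduces to the one for absolutely continuous functions: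
on `[a,b]` such an `f` agrees with `x ↦ f a + ∫ t in a..x, f' t`, which is absolutely continuous
with derivative `f'` almost everywhere by the Lebesgue differentiation theorem.
-/

namespace ACOn

variable {a b : ℝ} {f f' g g' : ℝ → ℝ}

theorem intervalIntegrable (hab : a ≤ b) (hf : ACOn a b f f') :
    IntervalIntegrable f' volume a b :=
  (hf.1.mono_set (uIcc_of_le hab).subset).intervalIntegrable

theorem continuousOn (hab : a ≤ b) (hf : ACOn a b f f') : ContinuousOn f (Icc a b) := by
  have hprim := intervalIntegral.continuousOn_primitive_interval' (hf.intervalIntegrable hab)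
    left_mem_uIcc
  rw [uIcc_of_le hab] at hprim
  exact (continuousOn_const.add hprim).congr hf.2

theorem absolutelyContinuousOnInterval_primitive (hab : a ≤ b) (hf : ACOn a b f f') :
    AbsolutelyContinuousOnInterval (fun x => f a + ∫ t in a..x, f' t) a b :=
  (LipschitzWith.const (f a)).lipschitzOnWith.absolutelyContinuousOnInterval.fun_add
    ((hf.intervalIntegrable hab).absolutelyContinuousOnInterval_intervalIntegral left_mem_uIcc)

theorem ae_hasDerivAt_primitive (hab : a ≤ b) (hf : ACOn a b f f') :
    ∀ᵐ x, x ∈ uIcc a b → HasDerivAt (fun x => f a + ∫ t in a..x, f' t) (f' x) x := by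
  filter_upwards [(hf.intervalIntegrable hab).ae_hasDerivAt_integral] with x hx hxab
  exact (hx hxab a left_mem_uIcc).const_add (f a)

theorem integral_deriv_mul_eq_sub (hab : a ≤ b) (hf : ACOn a b f f')
    (hg : ACOn a b g g') :
    ∫ x in a..b, (f' x * g x + f x * g' x) = f b * g b - f a * g a := by
  set F := fun x => f a + ∫ t in a..x, f' t
  set G := fun x => g a + ∫ t in a..x, g' t
  have hFG : EqOn (fun x => f' x * g x + f x * g' x) (fun x => f' x * G x + F x * g' x)
      (uIcc a b) := by
    intro x hx
    rw [uIcc_of_le hab] at hx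
    simp only [F, G, ← hf.2 x hx, ← hg.2 x hx]
  have hderiv : ∀ᵐ x, x ∈ uIoc a b → f' x * G x + F x * g' x = deriv (F * G) x := by
    filter_upwards [hf.ae_hasDerivAt_primitive hab, hg.ae_hasDerivAt_primitive hab]
      with x hF hG hx
    exact ((hF (uIoc_subset_uIcc hx)).mul (hG (uIoc_subset_uIcc hx))).deriv.symm
  have hb : b ∈ Icc a b := right_mem_Icc.2 hab
  have ha : a ∈ Icc a b := left_mem_Icc.2 hab
  rw [intervalIntegral.integral_congr hFG, intervalIntegral.integral_congr_ae hderiv,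
    ((hf.absolutelyContinuousOnInterval_primitive hab).mul
      (hg.absolutelyContinuousOnInterval_primitive hab)).integral_deriv_eq_sub]
  simp only [Pi.mul_apply, ← hf.2 b hb, ← hg.2 b hb, ← hf.2 a ha, ← hg.2 a ha]

theorem integral_deriv_mul_add_integral_mul_deriv (hab : a ≤ b) (hf : ACOn a b f f')
    (hg : ACOn a b g g') :
    (∫ x in a..b, f' x * g x) + ∫ x in a..b, f x * g' x = f b * g b - f a * g a := by
  have hcont : ∀ {h h'}, ACOn a b h h' → ContinuousOn h (uIcc a b) := fun hh =>
    uIcc_of_le hab ▸ hh.continuousOn hab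
  rw [← intervalIntegral.integral_add ((hf.intervalIntegrable hab).mul_continuousOn (hcont hg))
    ((hg.intervalIntegrable hab).continuousOn_mul (hcont hf))]
  exact integral_deriv_mul_eq_sub hab hf hg

end ACOn

theorem MemD1w.integral_w₂_mul {a u u' u'' w₁ w₂ v v' v'' : ℝ → ℝ}
    (hu : MemD1w a u u' u'' w₁ w₂) (hv : ACOn 0 1 v v') (hv' : ACOn 0 1 v' v'') :
    ∫ x in Ioo (0:ℝ) 1, w₂ x * v x =
      w₁ 1 * v 1 - w₁ 0 * v 0 + ∫ x in Ioo (0:ℝ) 1, a x * u'' x * v'' x := by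
  obtain ⟨-, -, -, -, hau'', hw₁, -, hu''0, hu''1⟩ := hu
  have h₁ := ACOn.integral_deriv_mul_add_integral_mul_deriv zero_le_one hw₁ hv
  have h₂ := ACOn.integral_deriv_mul_add_integral_mul_deriv zero_le_one hau'' hv'
  simp only [intervalIntegral.integral_of_le zero_le_one, integral_Ioc_eq_integral_Ioo] at h₁ h₂
  rw [hu''0, hu''1] at h₂
  linear_combination h₁ - h₂

theorem innerX_A1fun_left {a : ℝ → ℝ} {β₀ β₁ : ℝ} (γ₀ γ₁ : ℝ) (hβ₀ : β₀ ≠ 0) (hβ₁ : β₁ ≠ 0)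
    (ha₀ : a 0 ≠ 0) (ha₁ : a 1 ≠ 0) {u u' u'' w₁ w₂ v v' v'' : ℝ → ℝ}
    (hu : MemD1w a u u' u'' w₁ w₂) (hv : ACOn 0 1 v v') (hv' : ACOn 0 1 v' v'') :
    innerX a β₀ β₁ (A1fun a β₀ β₁ γ₀ γ₁ u w₁ w₂) v =
      (∫ x in Ioo (0:ℝ) 1, a x * u'' x * v'' x)
        - (γ₀ / β₀) * (a 0 * (u 0 * v 0)) - (γ₁ / β₁) * (a 1 * (u 1 * v 1)) := by
  have hinterior : ∫ x in Ioo (0:ℝ) 1, A1fun a β₀ β₁ γ₀ γ₁ u w₁ w₂ x * v x =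
      ∫ x in Ioo (0:ℝ) 1, w₂ x * v x :=
    setIntegral_congr_fun measurableSet_Ioo fun x hx => by
      simp [A1fun, hx.1.ne', hx.2.ne]
  rw [innerX, hinterior, hu.integral_w₂_mul hv hv']
  simp only [A1fun, if_pos, one_ne_zero, if_false]
  field_simp
  ring

theorem innerX_comm (a : ℝ → ℝ) (β₀ β₁ : ℝ) (f g : ℝ → ℝ) :
    innerX a β₀ β₁ f g = innerX a β₀ β₁ g f := by
  simp only [innerX, mul_comm (f _)]

theorem statement11_general (β₀ β₁ γ₀ γ₁ : ℝ) (hβ₀ : 0 < β₀) (hβ₁ : 0 < β₁)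
    (a : ℝ → ℝ) (x₀ : ℝ) (hx₀ : x₀ ∈ Set.Ioo (0:ℝ) 1) (ha : WeaklyDeg a x₀)
    (u u' u'' w₁ w₂ v v' v'' z₁ z₂ : ℝ → ℝ)
    (hu : MemD1w a u u' u'' w₁ w₂) (hv : MemD1w a v v' v'' z₁ z₂) :
    innerX a β₀ β₁ (A1fun a β₀ β₁ γ₀ γ₁ u w₁ w₂) v =
      (∫ x in Set.Ioo (0:ℝ) 1, a x * u'' x * v'' x)
        - (γ₀ / β₀) * (a 0 * (u 0 * v 0)) - (γ₁ / β₁) * (a 1 * (u 1 * v 1)) ∧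
    innerX a β₀ β₁ (A1fun a β₀ β₁ γ₀ γ₁ u w₁ w₂) v =
      innerX a β₀ β₁ u (A1fun a β₀ β₁ γ₀ γ₁ v z₁ z₂) := by
  have ha₀ : a 0 ≠ 0 := (ha.2.2.2.1 0 (left_mem_Icc.2 zero_le_one) hx₀.1.ne).ne'
  have ha₁ : a 1 ≠ 0 := (ha.2.2.2.1 1 (right_mem_Icc.2 zero_le_one) hx₀.2.ne').ne'
  have huv := innerX_A1fun_left γ₀ γ₁ hβ₀.ne' hβ₁.ne' ha₀ ha₁ hu hv.1 hv.2.2.1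
  have hvu := innerX_A1fun_left γ₀ γ₁ hβ₀.ne' hβ₁.ne' ha₀ ha₁ hv hu.1 hu.2.2.1
  refine ⟨huv, ?_⟩
  rw [huv, innerX_comm, hvu]
  simp only [mul_right_comm (a _) (v'' _), mul_comm (v _) (u _)]

/-- the operator `A₁` with generalized Wentzell boundary conditions is
symmetric on `X_μ`:
`⟨A₁u, v⟩ = ∫ a u'' v'' - (γ₀/β₀) a(0) u(0) v(0) - (γ₁/β₁) a(1) u(1) v(1) = ⟨u, A₁v⟩`. -/
theorem statement11 (β₀ β₁ γ₀ γ₁ : ℝ) (hβ₀ : 0 < β₀) (hβ₁ : 0 < β₁)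
    (hγ₀ : γ₀ ≤ 0) (hγ₁ : γ₁ ≤ 0)
    (a : ℝ → ℝ) (x₀ : ℝ) (hx₀ : x₀ ∈ Set.Ioo (0:ℝ) 1) (ha : WeaklyDeg a x₀)
    (u u' u'' w₁ w₂ v v' v'' z₁ z₂ : ℝ → ℝ)
    (hu : MemD1w a u u' u'' w₁ w₂) (hv : MemD1w a v v' v'' z₁ z₂) :
    innerX a β₀ β₁ (A1fun a β₀ β₁ γ₀ γ₁ u w₁ w₂) v =
      (∫ x in Set.Ioo (0:ℝ) 1, a x * u'' x * v'' x)
        - (γ₀ / β₀) * (a 0 * (u 0 * v 0)) - (γ₁ / β₁) * (a 1 * (u 1 * v 1)) ∧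
    innerX a β₀ β₁ (A1fun a β₀ β₁ γ₀ γ₁ u w₁ w₂) v =
      innerX a β₀ β₁ u (A1fun a β₀ β₁ γ₀ γ₁ v z₁ z₂) :=
  statement11_general β₀ β₁ γ₀ γ₁ hβ₀ hβ₁ a x₀ hx₀ ha u u' u'' w₁ w₂ v v' v'' z₁ z₂ hu hv
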